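/- Let X be a normed space, (xₙ) an essential basic sequence with Grunblum constant M, and (yₙ) a sequence with ∑ₙ ‖xₙ − yₙ‖·‖xₙ*‖ = λ < 1. Then (yₙ) satisfies the Grunblum condition with constant (1+λ)M/(1−λ): for all scalars and m ≤ n, ‖∑_{i=1}^m aᵢyᵢ‖ ≤ ((1+λ)M/(1−λ))‖∑_{i=1}^n aᵢyᵢ‖. -/

import Mathlib

open Filter Topology

variable (𝕜 : Type*) [RCLike 𝕜]
variable {X : Type*} [NormedAddCommGroup X] [NormedSpace 𝕜 X]

/-- The `n`-th partial sum `∑_{i<n} aᵢ • xᵢ` of the expansion with coefficients `a`. -/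
noncomputable def partialSum (x : ℕ → X) (a : ℕ → 𝕜) (n : ℕ) : X :=
  ∑ i ∈ Finset.range n, a i • x i

/-- `v` has the expansion `v = ∑ᵢ aᵢ xᵢ` (ordered convergence of partial sums). -/
def Expands (x : ℕ → X) (a : ℕ → 𝕜) (v : X) : Prop :=
  Filter.Tendsto (partialSum 𝕜 x a) Filter.atTop (nhds v)

/-- `(xₙ)` is a Schauder basis of `X`: every vector has a unique expansion. -/
def IsSchauderBasis (x : ℕ → X) : Prop :=
  ∀ v : X, ∃! a : ℕ → 𝕜, Expands 𝕜 x a v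

/-- `(xₙ)` is an essential Schauder basis of `X`: a Schauder basis for which the canonical
map `T : L_X → X` is an isomorphism; equivalently (since `‖T‖ ≤ 1` always holds), there is
`C > 0` bounding `η(a) = supₙ ‖∑_{i<n} aᵢxᵢ‖ ≤ C‖v‖` for every expansion `v = ∑ aᵢxᵢ`,
i.e. `‖T⁻¹‖ ≤ C`. -/
def IsEssentialBasis (x : ℕ → X) : Prop :=
  IsSchauderBasis 𝕜 x ∧
    ∃ C > 0, ∀ (a : ℕ → 𝕜) (v : X), Expands 𝕜 x a v →
      ∀ n, ‖partialSum 𝕜 x a n‖ ≤ C * ‖v‖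

/-- `(xₙ)` is an essential basic sequence: an essential Schauder basis of the closure of
its linear span. -/
def IsEssentialBasicSeq (x : ℕ → X) : Prop :=
  (∀ v ∈ closure (Submodule.span 𝕜 (Set.range x) : Set X),
      ∃! a : ℕ → 𝕜, Expands 𝕜 x a v) ∧
    ∃ C > 0, ∀ (a : ℕ → 𝕜) (v : X), Expands 𝕜 x a v →
      ∀ n, ‖partialSum 𝕜 x a n‖ ≤ C * ‖v‖

/-- The Grunblum condition with constant `M`. -/
def Grunblum (x : ℕ → X) (M : ℝ) : Prop :=
  ∀ (a : ℕ → 𝕜) (m n : ℕ), m ≤ n →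
    ‖partialSum 𝕜 x a m‖ ≤ M * ‖partialSum 𝕜 x a n‖

/-!
Write `Sₖ(x) = ∑_{i<k} aᵢxᵢ` and `λ = ∑ᵢ ‖xᵢ - yᵢ‖ Kᵢ`. Since `Sₙ(x)` itself has the finite
expansion `(a₀, …, aₙ₋₁, 0, …)`, the coefficient bounds give `‖aᵢ‖ ≤ Kᵢ ‖Sₙ(x)‖` for `i < n`, hence
`‖Sₖ(x) - Sₖ(y)‖ = ‖∑_{i<k} aᵢ(xᵢ - yᵢ)‖ ≤ λ ‖Sₙ(x)‖` for every `k ≤ n`. Taking `k = n` gives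
`(1 - λ)‖Sₙ(x)‖ ≤ ‖Sₙ(y)‖`, and taking `k = m` together with the Grunblum condition for `(xₙ)`
gives `‖Sₘ(y)‖ ≤ (M + λ)‖Sₙ(x)‖ ≤ (1 + λ)M ‖Sₙ(x)‖`.
-/

lemma expands_of_eventually_eq {x : ℕ → X} {a : ℕ → 𝕜} {v : X} (N : ℕ)
    (h : ∀ k ≥ N, partialSum 𝕜 x a k = v) : Expands 𝕜 x a v :=
  tendsto_const_nhds.congr' <| eventually_atTop.2 ⟨N, fun k hk => (h k hk).symm⟩

lemma expands_single (x : ℕ → X) (i : ℕ) :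
    Expands 𝕜 x (fun j => if j = i then 1 else 0) (x i) := by
  refine expands_of_eventually_eq 𝕜 (i + 1) fun k hk => ?_
  simp [partialSum, ite_smul, Finset.mem_range.2 hk]

lemma expands_partialSum (x : ℕ → X) (a : ℕ → 𝕜) (n : ℕ) :
    Expands 𝕜 x (fun j => if j < n then a j else 0) (partialSum 𝕜 x a n) := by
  refine expands_of_eventually_eq 𝕜 n fun k hk => ?_
  unfold partialSum
  rw [← Finset.sum_subset (Finset.range_subset_range.2 hk)]
  · exact Finset.sum_congr rfl fun i hi => by simp [Finset.mem_range.1 hi]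
  · intro i _ hi
    simp [Finset.mem_range.not.1 hi]

lemma partialSum_sub (x y : ℕ → X) (a : ℕ → 𝕜) (k : ℕ) :
    partialSum 𝕜 x a k - partialSum 𝕜 y a k = partialSum 𝕜 (x - y) a k := by
  simp only [partialSum, ← Finset.sum_sub_distrib, Pi.sub_apply, smul_sub]

section CoefficientBounds

variable {x : ℕ → X} {K : ℕ → ℝ}
  (hK : ∀ (n : ℕ) (a : ℕ → 𝕜) (v : X), Expands 𝕜 x a v → ‖a n‖ ≤ K n * ‖v‖)
include hK

lemma coeff_bound_nonneg (i : ℕ) : 0 ≤ K i := by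
  have h := hK i _ _ (expands_single 𝕜 x i)
  simp only [if_pos, norm_one] at h
  nlinarith [norm_nonneg (x i)]

lemma norm_coeff_le_mul_norm_partialSum (a : ℕ → 𝕜) {i n : ℕ} (hi : i < n) :
    ‖a i‖ ≤ K i * ‖partialSum 𝕜 x a n‖ := by
  simpa [if_pos hi] using hK i _ _ (expands_partialSum 𝕜 x a n)

lemma norm_partialSum_sub_le (y : ℕ → X) (hsum : Summable fun n => ‖x n - y n‖ * K n)
    (a : ℕ → 𝕜) {k n : ℕ} (hkn : k ≤ n) :
    ‖partialSum 𝕜 x a k - partialSum 𝕜 y a k‖ ≤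
      (∑' i, ‖x i - y i‖ * K i) * ‖partialSum 𝕜 x a n‖ := by
  rw [partialSum_sub, partialSum]
  calc ‖∑ i ∈ Finset.range k, a i • (x - y) i‖
      ≤ ∑ i ∈ Finset.range k, ‖a i‖ * ‖x i - y i‖ := by
        simpa only [norm_smul, Pi.sub_apply] using
          norm_sum_le (Finset.range k) fun i => a i • (x - y) i
    _ ≤ ∑ i ∈ Finset.range k, ‖x i - y i‖ * K i * ‖partialSum 𝕜 x a n‖ := by
        refine Finset.sum_le_sum fun i hi => ?_
        have hin : i < n := (Finset.mem_range.1 hi).trans_le hkn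
        nlinarith [norm_coeff_le_mul_norm_partialSum 𝕜 hK a hin, norm_nonneg (x i - y i)]
    _ ≤ (∑' i, ‖x i - y i‖ * K i) * ‖partialSum 𝕜 x a n‖ := by
        rw [← Finset.sum_mul]
        gcongr
        exact hsum.sum_le_tsum _ fun i _ =>
          mul_nonneg (norm_nonneg _) (coeff_bound_nonneg 𝕜 hK i)

end CoefficientBounds

theorem stmt12 (x y : ℕ → X)
    (M : ℝ) (hM : 1 ≤ M) (hG : Grunblum 𝕜 x M)
    (K : ℕ → ℝ)
    (hK : ∀ (n : ℕ) (a : ℕ → 𝕜) (v : X), Expands 𝕜 x a v → ‖a n‖ ≤ K n * ‖v‖)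
    (hsum : Summable fun n => ‖x n - y n‖ * K n)
    (hlam : (∑' n, ‖x n - y n‖ * K n) < 1) :
    Grunblum 𝕜 y ((1 + ∑' m, ‖x m - y m‖ * K m) * M / (1 - ∑' m, ‖x m - y m‖ * K m)) := by
  set lam := ∑' m, ‖x m - y m‖ * K m
  have hlam0 : 0 ≤ lam :=
    tsum_nonneg fun i => mul_nonneg (norm_nonneg _) (coeff_bound_nonneg 𝕜 hK i)
  intro a m n hmn
  set A := ‖partialSum 𝕜 x a n‖
  have hA0 : 0 ≤ A := norm_nonneg _
  have hlower : (1 - lam) * A ≤ ‖partialSum 𝕜 y a n‖ := by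
    linarith [norm_sub_norm_le (partialSum 𝕜 x a n) (partialSum 𝕜 y a n),
      norm_partialSum_sub_le 𝕜 hK y hsum a (le_refl n)]
  have hupper : ‖partialSum 𝕜 y a m‖ ≤ (1 + lam) * M * A :=
    calc ‖partialSum 𝕜 y a m‖
        ≤ ‖partialSum 𝕜 x a m‖ + ‖partialSum 𝕜 x a m - partialSum 𝕜 y a m‖ :=
          norm_le_norm_add_norm_sub _ _
      _ ≤ M * A + lam * A := add_le_add (hG a m n hmn) (norm_partialSum_sub_le 𝕜 hK y hsum a hmn)
      _ ≤ (1 + lam) * M * A := by nlinarith [mul_nonneg (mul_nonneg hlam0 (sub_nonneg.2 hM)) hA0]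
  calc ‖partialSum 𝕜 y a m‖ ≤ (1 + lam) * M / (1 - lam) * ((1 - lam) * A) := by
        rwa [← mul_assoc, div_mul_cancel₀ _ (by linarith)]
    _ ≤ (1 + lam) * M / (1 - lam) * ‖partialSum 𝕜 y a n‖ := by
        gcongr
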